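/- In the STV construction with candidates {w,c} ∪ {d_0,...,d_q} ∪ {b_1,b̄_1,...,b_q,b̄_q} and the known profile P described below, for any profile P' of q/3 additional top-ℓ votes, the STV winner of P ∪ P' is either c or w. -/

import Mathlib

/-- Candidates of the STV reduction: `w`, `c`, `d_0,…,d_q`, and `b_i`, `b̄_i` for `i ≤ q`. -/
inductive SCand (q : ℕ) where
  | w : SCand q
  | c : SCand q
  | d : Fin (q + 1) → SCand q
  | b : Fin q → SCand q
  | bb : Fin q → SCand q
deriving DecidableEq

instance (q : ℕ) : Nonempty (SCand q) := ⟨SCand.c⟩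

instance (q : ℕ) : Fintype (SCand q) :=
  Fintype.ofSurjective
    (fun z : (Unit ⊕ Unit) ⊕ (Fin (q + 1) ⊕ (Fin q ⊕ Fin q)) =>
      match z with
      | .inl (.inl _) => SCand.w
      | .inl (.inr _) => SCand.c
      | .inr (.inl i) => SCand.d i
      | .inr (.inr (.inl i)) => SCand.b i
      | .inr (.inr (.inr i)) => SCand.bb i)
    (by intro y
        cases y with
        | w => exact ⟨.inl (.inl ()), rfl⟩
        | c => exact ⟨.inl (.inr ()), rfl⟩
        | d i => exact ⟨.inr (.inl i), rfl⟩
        | b i => exact ⟨.inr (.inr (.inl i)), rfl⟩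
        | bb i => exact ⟨.inr (.inr (.inr i)), rfl⟩)

/-- The highest-ranked not-yet-eliminated candidate of a vote (`A` = remaining candidates). -/
def topRem {C : Type} [DecidableEq C] (A : Finset C) (l : List C) : Option C :=
  (l.filter fun x => decide (x ∈ A)).head?

/-- Plurality score of `x` among remaining candidates `A`: the number of votes whose
highest-ranked remaining candidate is `x` (votes with no remaining ranked candidate
count for nobody). -/
def plu {C : Type} [DecidableEq C] (P : List (List C)) (A : Finset C) (x : C) : ℕ :=
  P.countP fun l => decide (topRem A l = some x)

/-- The candidate eliminated in the current round: a remaining candidate with the lowest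
plurality score, ties broken by eliminating the one of lowest tie-breaking priority
(largest value of `tb`). -/
noncomputable def loser {C : Type} [DecidableEq C] (tb : C → ℕ) (P : List (List C))
    (A : Finset C) (hA : A.Nonempty) : C :=
  (Finset.exists_min_image A
    (fun x => toLex (plu P A x, OrderDual.toDual (tb x))) hA).choose

theorem loser_mem {C : Type} [DecidableEq C] (tb : C → ℕ) (P : List (List C))
    (A : Finset C) (hA : A.Nonempty) : loser tb P A hA ∈ A :=
  (Finset.exists_min_image A
    (fun x => toLex (plu P A x, OrderDual.toDual (tb x))) hA).choose_spec.1

/-- The STV winner: repeatedly eliminate the remaining candidate with lowest plurality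
score (with tie-breaking priority `tb`) until one candidate remains. -/
noncomputable def stvWinner {C : Type} [Fintype C] [DecidableEq C] [Nonempty C]
    (tb : C → ℕ) (P : List (List C)) (A : Finset C) : C :=
  if h : 1 < A.card then
    stvWinner tb P (A.erase (loser tb P A (Finset.card_pos.mp (by omega))))
  else if h2 : A.Nonempty then h2.choose else Classical.arbitrary C
termination_by A.card
decreasing_by
  exact Finset.card_erase_lt_of_mem (loser_mem _ _ _ _)

/-- The known profile `P` of the STV reduction (votes listed by their ranked prefixes;
`d j.succ` plays the role of `d_j` for the element `x_j`, `j = 1,…,q` one-indexed). -/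
noncomputable def knownProfile (q : ℕ) (Sf : Fin q → Finset (Fin q)) : List (List (SCand q)) :=
  List.replicate (12 * q) [.c, .w] ++
  List.replicate (12 * q - 1) [.w, .c] ++
  List.replicate (10 * q + 2 * q / 3) [.d 0, .w, .c] ++
  ((List.finRange q).flatMap fun i =>
    List.replicate (12 * q - 2) [.d i.succ, .w, .c]) ++
  ((List.finRange q).flatMap fun i =>
    List.replicate (6 * q + 4 * (i.val + 1) - 6) [.b i, .bb i, .w, .c] ++
    ((Sf i).toList.flatMap fun j => List.replicate 2 [.b i, .d j.succ, .w, .c])) ++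
  ((List.finRange q).flatMap fun i =>
    List.replicate (6 * q + 4 * (i.val + 1) - 2) [.bb i, .b i, .w, .c] ++
    List.replicate 2 [.bb i, .d 0, .w, .c])


section STVAux

open List

lemma stvCountP_flatMap {α β : Type*} (l : List α) (f : α → List β) (p : β → Bool) :
    (l.flatMap f).countP p = (l.map fun a => (f a).countP p).sum := by
  induction l with
  | nil => rfl
  | cons a l ih => simp [List.flatMap_cons, List.countP_append, ih]

lemma sum_map_le_single {α : Type*} (l : List α) (hnd : l.Nodup) (f : α → ℕ) (a0 : α) (K : ℕ)
    (h0 : ∀ a ∈ l, a ≠ a0 → f a = 0) (hK : f a0 ≤ K) : (l.map f).sum ≤ K := by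
  induction l with
  | nil => simp
  | cons a l ih =>
    rw [List.map_cons, List.sum_cons]
    rcases eq_or_ne a a0 with rfl | hne
    · have hz : (l.map f).sum = 0 := by
        rw [List.sum_eq_zero]
        intro x hx
        obtain ⟨b, hb, rfl⟩ := List.mem_map.mp hx
        exact h0 b (List.mem_cons_of_mem _ hb) (fun e => (List.nodup_cons.mp hnd).1 (e ▸ hb))
      omega
    · rw [h0 a (List.mem_cons_self) hne, Nat.zero_add]
      exact ih (List.nodup_cons.mp hnd).2 (fun b hb => h0 b (List.mem_cons_of_mem _ hb))

lemma sum_map_le_const {α : Type*} (l : List α) (f : α → ℕ) (K : ℕ)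
    (h : ∀ a ∈ l, f a ≤ K) : (l.map f).sum ≤ l.length * K := by
  induction l with
  | nil => simp
  | cons a l ih =>
    rw [List.map_cons, List.sum_cons, List.length_cons, Nat.succ_mul]
    have h1 := ih (fun b hb => h b (List.mem_cons_of_mem _ hb))
    have h2 := h a (List.mem_cons_self)
    omega

lemma topRem_cons {C : Type} [DecidableEq C] (A : Finset C) (x : C) (l : List C) :
    topRem A (x :: l) = if x ∈ A then some x else topRem A l := by
  simp only [topRem, List.filter_cons]
  by_cases h : x ∈ A <;> simp [h]

lemma topRem_mem {C : Type} [DecidableEq C] {A : Finset C} {l : List C} {y : C}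
    (h : topRem A l = some y) : y ∈ l ∧ y ∈ A := by
  unfold topRem at h
  have hy : y ∈ l.filter fun x => decide (x ∈ A) := by
    cases hf : l.filter fun x => decide (x ∈ A) with
    | nil => rw [hf] at h; simp at h
    | cons b t =>
      rw [hf] at h
      simp only [List.head?_cons, Option.some.injEq] at h
      simp [hf, h]
  have := List.mem_filter.mp hy
  exact ⟨this.1, by simpa using this.2⟩

lemma plu_append {C : Type} [DecidableEq C] (P1 P2 : List (List C)) (A : Finset C) (x : C) :
    plu (P1 ++ P2) A x = plu P1 A x + plu P2 A x := List.countP_append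

lemma plu_le_memcount {C : Type} [DecidableEq C] (P : List (List C)) (A : Finset C) (y : C) :
    plu P A y ≤ P.countP fun l => decide (y ∈ l) := by
  apply List.countP_mono_left
  intro l _ h
  simp only [decide_eq_true_eq] at h ⊢
  exact (topRem_mem h).1

lemma plu_le_length {C : Type} [DecidableEq C] (P : List (List C)) (A : Finset C) (y : C) :
    plu P A y ≤ P.length := List.countP_le_length

lemma loser_min {C : Type} [DecidableEq C] (tb : C → ℕ) (P : List (List C))
    (A : Finset C) (hA : A.Nonempty) : ∀ y ∈ A,
    toLex (plu P A (loser tb P A hA), OrderDual.toDual (tb (loser tb P A hA))) ≤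
    toLex (plu P A y, OrderDual.toDual (tb y)) :=
  (Finset.exists_min_image A
    (fun x => toLex (plu P A x, OrderDual.toDual (tb x))) hA).choose_spec.2

lemma known_count_le {q : ℕ} (Sf : Fin q → Finset (Fin q)) (hS : ∀ i, (Sf i).card = 3)
    (y : SCand q) (hw : y ≠ SCand.w) (hc : y ≠ SCand.c) :
    (knownProfile q Sf).countP (fun l => decide (y ∈ l)) ≤ 20 * q := by
  set p : List (SCand q) → Bool := fun l => decide (y ∈ l) with hp
  have hz : ∀ (n : ℕ) (l : List (SCand q)), y ∉ l → List.countP p (List.replicate n l) = 0 := by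
    intro n l hyl; rw [List.countP_replicate]; simp [hp, hyl]
  have hle : ∀ (n : ℕ) (l : List (SCand q)), List.countP p (List.replicate n l) ≤ n := by
    intro n l; rw [List.countP_replicate]; split <;> omega
  have hlen6 : ∀ i : Fin q,
      ((Sf i).toList.flatMap fun j' =>
        List.replicate 2 [SCand.b i, SCand.d j'.succ, SCand.w, SCand.c]).length = 6 := by
    intro i
    rw [List.length_flatMap]
    simp [Function.comp_def, Finset.length_toList, hS i]
  unfold knownProfile
  simp only [List.countP_append]
  have h1 : List.countP p (List.replicate (12 * q) [SCand.c, SCand.w]) = 0 :=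
    hz _ _ (by simp [hw, hc])
  have h2 : List.countP p (List.replicate (12 * q - 1) [SCand.w, SCand.c]) = 0 :=
    hz _ _ (by simp [hw, hc])
  rw [h1, h2]
  cases y with
  | w => exact absurd rfl hw
  | c => exact absurd rfl hc
  | d j =>
    rcases eq_or_ne j 0 with rfl | hj
    · have h3 : List.countP p (List.replicate (10 * q + 2 * q / 3)
          [SCand.d 0, SCand.w, SCand.c]) ≤ 10 * q + 2 * q / 3 := hle _ _
      have h4 : List.countP p ((List.finRange q).flatMap fun i =>
          List.replicate (12 * q - 2) [SCand.d i.succ, SCand.w, SCand.c]) = 0 := by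
        rw [stvCountP_flatMap, List.sum_eq_zero]
        intro x hx
        obtain ⟨i, _, rfl⟩ := List.mem_map.mp hx
        exact hz _ _ (by simp [Fin.succ_ne_zero i, (Fin.succ_ne_zero i).symm])
      have h5 : List.countP p ((List.finRange q).flatMap fun i =>
          List.replicate (6 * q + 4 * (i.val + 1) - 6) [SCand.b i, SCand.bb i, SCand.w, SCand.c] ++
          ((Sf i).toList.flatMap fun j => List.replicate 2
            [SCand.b i, SCand.d j.succ, SCand.w, SCand.c])) = 0 := by
        rw [stvCountP_flatMap, List.sum_eq_zero]
        intro x hx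
        obtain ⟨i, _, rfl⟩ := List.mem_map.mp hx
        rw [List.countP_append, hz _ _ (by simp), Nat.zero_add, List.countP_eq_zero]
        intro a ha
        obtain ⟨j', _, ha⟩ := List.mem_flatMap.mp ha
        rw [(List.mem_replicate.mp ha).2]
        simp [hp, Fin.succ_ne_zero j', (Fin.succ_ne_zero j').symm]
      have h6 : List.countP p ((List.finRange q).flatMap fun i =>
          List.replicate (6 * q + 4 * (i.val + 1) - 2) [SCand.bb i, SCand.b i, SCand.w, SCand.c] ++
          List.replicate 2 [SCand.bb i, SCand.d 0, SCand.w, SCand.c]) ≤ 2 * q := by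
        rw [stvCountP_flatMap]
        have := sum_map_le_const (List.finRange q)
          (fun i => List.countP p
            (List.replicate (6 * q + 4 * (i.val + 1) - 2) [SCand.bb i, SCand.b i, SCand.w, SCand.c] ++
             List.replicate 2 [SCand.bb i, SCand.d 0, SCand.w, SCand.c])) 2
          (fun i _ => by
            rw [List.countP_append, hz _ _ (by simp), Nat.zero_add]
            exact hle _ _)
        rw [List.length_finRange] at this
        omega
      have hdiv : 2 * q / 3 ≤ q := by omega
      omega
    · have h3 : List.countP p (List.replicate (10 * q + 2 * q / 3)
          [SCand.d 0, SCand.w, SCand.c]) = 0 := hz _ _ (by simp [hj, hj.symm])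
      have hjv : j.val ≠ 0 := fun h => hj (Fin.ext h)
      have hjlt : j.val - 1 < q := by have := j.isLt; omega
      have h4 : List.countP p ((List.finRange q).flatMap fun i =>
          List.replicate (12 * q - 2) [SCand.d i.succ, SCand.w, SCand.c]) ≤ 12 * q := by
        rw [stvCountP_flatMap]
        apply sum_map_le_single _ (List.nodup_finRange q) _ ⟨j.val - 1, hjlt⟩ (12 * q)
        · intro i _ hne
          apply hz
          have : j ≠ i.succ := by
            intro h
            apply hne
            apply Fin.ext
            have : j.val = i.val + 1 := by rw [h]; rfl
            simp [this]
          simp [this, this.symm]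
        · exact (hle _ _).trans (by omega)
      have h5 : List.countP p ((List.finRange q).flatMap fun i =>
          List.replicate (6 * q + 4 * (i.val + 1) - 6) [SCand.b i, SCand.bb i, SCand.w, SCand.c] ++
          ((Sf i).toList.flatMap fun j => List.replicate 2
            [SCand.b i, SCand.d j.succ, SCand.w, SCand.c])) ≤ 6 * q := by
        rw [stvCountP_flatMap]
        have := sum_map_le_const (List.finRange q)
          (fun i => List.countP p
            (List.replicate (6 * q + 4 * (i.val + 1) - 6) [SCand.b i, SCand.bb i, SCand.w, SCand.c] ++
             ((Sf i).toList.flatMap fun j => List.replicate 2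
               [SCand.b i, SCand.d j.succ, SCand.w, SCand.c]))) 6
          (fun i _ => by
            rw [List.countP_append, hz _ _ (by simp), Nat.zero_add]
            exact List.countP_le_length.trans (le_of_eq (hlen6 i)))
        rw [List.length_finRange] at this
        omega
      have h6 : List.countP p ((List.finRange q).flatMap fun i =>
          List.replicate (6 * q + 4 * (i.val + 1) - 2) [SCand.bb i, SCand.b i, SCand.w, SCand.c] ++
          List.replicate 2 [SCand.bb i, SCand.d 0, SCand.w, SCand.c]) = 0 := by
        rw [stvCountP_flatMap, List.sum_eq_zero]
        intro x hx
        obtain ⟨i, _, rfl⟩ := List.mem_map.mp hx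
        rw [List.countP_append, hz _ _ (by simp), hz _ _ (by simp [hj, hj.symm])]
        rfl
      omega
  | b i0 =>
    have h3 : List.countP p (List.replicate (10 * q + 2 * q / 3)
        [SCand.d 0, SCand.w, SCand.c]) = 0 := hz _ _ (by simp)
    have h4 : List.countP p ((List.finRange q).flatMap fun i =>
        List.replicate (12 * q - 2) [SCand.d i.succ, SCand.w, SCand.c]) = 0 := by
      rw [stvCountP_flatMap, List.sum_eq_zero]
      intro x hx
      obtain ⟨i, _, rfl⟩ := List.mem_map.mp hx
      exact hz _ _ (by simp)
    have h5 : List.countP p ((List.finRange q).flatMap fun i =>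
        List.replicate (6 * q + 4 * (i.val + 1) - 6) [SCand.b i, SCand.bb i, SCand.w, SCand.c] ++
        ((Sf i).toList.flatMap fun j => List.replicate 2
          [SCand.b i, SCand.d j.succ, SCand.w, SCand.c])) ≤ 10 * q := by
      rw [stvCountP_flatMap]
      apply sum_map_le_single _ (List.nodup_finRange q) _ i0 (10 * q)
      · intro i _ hne
        rw [List.countP_append, hz _ _ (by simp [hne.symm]), Nat.zero_add, List.countP_eq_zero]
        intro a ha
        obtain ⟨j', _, ha⟩ := List.mem_flatMap.mp ha
        rw [(List.mem_replicate.mp ha).2]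
        simp [hp, hne.symm]
      · refine List.countP_le_length.trans ?_
        rw [List.length_append, List.length_replicate, hlen6 i0]
        have := i0.isLt
        omega
    have h6 : List.countP p ((List.finRange q).flatMap fun i =>
        List.replicate (6 * q + 4 * (i.val + 1) - 2) [SCand.bb i, SCand.b i, SCand.w, SCand.c] ++
        List.replicate 2 [SCand.bb i, SCand.d 0, SCand.w, SCand.c]) ≤ 10 * q := by
      rw [stvCountP_flatMap]
      apply sum_map_le_single _ (List.nodup_finRange q) _ i0 (10 * q)
      · intro i _ hne
        rw [List.countP_append, hz _ _ (by simp [hne.symm]), hz _ _ (by simp)]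
      · refine List.countP_le_length.trans ?_
        rw [List.length_append, List.length_replicate, List.length_replicate]
        have := i0.isLt
        omega
    omega
  | bb i0 =>
    have h3 : List.countP p (List.replicate (10 * q + 2 * q / 3)
        [SCand.d 0, SCand.w, SCand.c]) = 0 := hz _ _ (by simp)
    have h4 : List.countP p ((List.finRange q).flatMap fun i =>
        List.replicate (12 * q - 2) [SCand.d i.succ, SCand.w, SCand.c]) = 0 := by
      rw [stvCountP_flatMap, List.sum_eq_zero]
      intro x hx
      obtain ⟨i, _, rfl⟩ := List.mem_map.mp hx
      exact hz _ _ (by simp)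
    have h5 : List.countP p ((List.finRange q).flatMap fun i =>
        List.replicate (6 * q + 4 * (i.val + 1) - 6) [SCand.b i, SCand.bb i, SCand.w, SCand.c] ++
        ((Sf i).toList.flatMap fun j => List.replicate 2
          [SCand.b i, SCand.d j.succ, SCand.w, SCand.c])) ≤ 10 * q := by
      rw [stvCountP_flatMap]
      apply sum_map_le_single _ (List.nodup_finRange q) _ i0 (10 * q)
      · intro i _ hne
        rw [List.countP_append, hz _ _ (by simp [hne.symm]), Nat.zero_add, List.countP_eq_zero]
        intro a ha
        obtain ⟨j', _, ha⟩ := List.mem_flatMap.mp ha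
        rw [(List.mem_replicate.mp ha).2]
        simp [hp]
      · refine List.countP_le_length.trans ?_
        rw [List.length_append, List.length_replicate, hlen6 i0]
        have := i0.isLt
        omega
    have h6 : List.countP p ((List.finRange q).flatMap fun i =>
        List.replicate (6 * q + 4 * (i.val + 1) - 2) [SCand.bb i, SCand.b i, SCand.w, SCand.c] ++
        List.replicate 2 [SCand.bb i, SCand.d 0, SCand.w, SCand.c]) ≤ 10 * q := by
      rw [stvCountP_flatMap]
      apply sum_map_le_single _ (List.nodup_finRange q) _ i0 (10 * q)
      · intro i _ hne
        rw [List.countP_append, hz _ _ (by simp [hne.symm]), hz _ _ (by simp [hne.symm])]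
      · refine List.countP_le_length.trans ?_
        rw [List.length_append, List.length_replicate, List.length_replicate]
        have := i0.isLt
        omega
    omega

lemma plu_rep_eq {C : Type} [DecidableEq C] (n : ℕ) (l : List C) (A : Finset C) (x : C)
    (h : topRem A l = some x) : plu (List.replicate n l) A x = n := by
  unfold plu
  rw [List.countP_replicate]
  simp [h]

lemma plu_cw_ge {q : ℕ} (Sf : Fin q → Finset (Fin q)) (P' : List (List (SCand q)))
    (A : Finset (SCand q)) (x : SCand q)
    (hx : topRem A [SCand.c, SCand.w] = some x ∧ topRem A [SCand.w, SCand.c] = some x) :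
    24 * q - 1 ≤ plu (knownProfile q Sf ++ P') A x := by
  rw [plu_append]
  unfold knownProfile
  rw [plu_append, plu_append, plu_append, plu_append, plu_append]
  rw [plu_rep_eq _ _ _ _ hx.1, plu_rep_eq _ _ _ _ hx.2]
  omega

end STVAux

/-- In the STV construction over an RXC3 instance (`q ≥ 6` even and divisible by 3, each
`|S_i| = 3`, each element in exactly three sets), with tie-breaking priority
`d_0 ≻ d_1 ≻ ⋯ ≻ d_q ≻ b_1 ≻ b̄_1 ≻ ⋯ ≻ b_q ≻ b̄_q`: for any profile `P'` of `q/3`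
additional top-ℓ votes, the STV winner of `P ∪ P'` is either `c` or `w`. -/
theorem stv_winner_c_or_w (q ℓ : ℕ) (hq : 6 ≤ q) (heven : 2 ∣ q) (h3 : 3 ∣ q)
    (hℓ : 2 ≤ ℓ)
    (Sf : Fin q → Finset (Fin q))
    (hS : ∀ i, (Sf i).card = 3)
    (hx3 : ∀ j : Fin q, (Finset.univ.filter fun i => j ∈ Sf i).card = 3)
    (tb : SCand q → ℕ) (htb : Function.Injective tb)
    (htbd : ∀ i j : Fin (q + 1), i < j → tb (SCand.d i) < tb (SCand.d j))
    (htbdb : ∀ (i : Fin (q + 1)) (k : Fin q),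
      tb (SCand.d i) < tb (SCand.b k) ∧ tb (SCand.d i) < tb (SCand.bb k))
    (htbb : ∀ k : Fin q, tb (SCand.b k) < tb (SCand.bb k))
    (htbbb : ∀ k k' : Fin q, k < k' → tb (SCand.bb k) < tb (SCand.b k'))
    (P' : List (List (SCand q)))
    (hlen : P'.length = q / 3)
    (hP' : ∀ l ∈ P', l.Nodup ∧ l.length = ℓ) :
    stvWinner tb (knownProfile q Sf ++ P') Finset.univ = SCand.c ∨
    stvWinner tb (knownProfile q Sf ++ P') Finset.univ = SCand.w := by
  have hdiv : q / 3 ≤ q := Nat.div_le_self q 3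
  set Pf := knownProfile q Sf ++ P' with hPf
  have hother : ∀ (y : SCand q) (A : Finset (SCand q)), y ≠ SCand.w → y ≠ SCand.c →
      plu Pf A y ≤ 20 * q + q / 3 := by
    intro y A hyw hyc
    rw [hPf, plu_append]
    have h1 := (plu_le_memcount (knownProfile q Sf) A y).trans (known_count_le Sf hS y hyw hyc)
    have h2 := (plu_le_length P' A y).trans_eq hlen
    omega
  have key : ∀ A : Finset (SCand q), (SCand.c ∈ A ∨ SCand.w ∈ A) →
      stvWinner tb Pf A = SCand.c ∨ stvWinner tb Pf A = SCand.w := by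
    intro A
    induction A using Finset.strongInduction with
    | _ A IH =>
      intro hcw
      have hne : A.Nonempty := by
        rcases hcw with h | h
        exacts [⟨_, h⟩, ⟨_, h⟩]
      rw [stvWinner]
      by_cases h1 : 1 < A.card
      · rw [dif_pos h1]
        have main : ∀ hA : A.Nonempty,
            SCand.c ∈ A.erase (loser tb Pf A hA) ∨ SCand.w ∈ A.erase (loser tb Pf A hA) := by
          intro hA
          have hLmem : loser tb Pf A hA ∈ A := loser_mem _ _ _ _
          have hmin := loser_min tb Pf A hA
          by_cases hcA : SCand.c ∈ A
          · by_cases hwA : SCand.w ∈ A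
            · rcases eq_or_ne (loser tb Pf A hA) SCand.c with hLe | hLe
              · refine Or.inr (Finset.mem_erase.mpr ⟨?_, hwA⟩)
                rw [hLe]; simp
              · exact Or.inl (Finset.mem_erase.mpr ⟨Ne.symm hLe, hcA⟩)
            · refine Or.inl (Finset.mem_erase.mpr ⟨?_, hcA⟩)
              intro hLe
              have hge := plu_cw_ge Sf P' A SCand.c
                ⟨by rw [topRem_cons, if_pos hcA],
                 by rw [topRem_cons, if_neg hwA, topRem_cons, if_pos hcA]⟩
              obtain ⟨y, hyA, hyc⟩ := Finset.exists_mem_ne h1 SCand.c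
              have hyw : y ≠ SCand.w := fun h => hwA (h ▸ hyA)
              have hy := hother y A hyw hyc
              have hm := hmin y hyA
              have hle2 : plu Pf A (loser tb Pf A hA) ≤ plu Pf A y := by
                rcases Prod.Lex.le_iff.mp hm with h | h
                · exact le_of_lt h
                · exact le_of_eq h.1
              rw [← hLe] at hle2
              rw [← hPf] at hge
              omega
          · have hwA : SCand.w ∈ A := hcw.resolve_left hcA
            refine Or.inr (Finset.mem_erase.mpr ⟨?_, hwA⟩)
            intro hLe
            have hge := plu_cw_ge Sf P' A SCand.w
              ⟨by rw [topRem_cons, if_neg hcA, topRem_cons, if_pos hwA],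
               by rw [topRem_cons, if_pos hwA]⟩
            obtain ⟨y, hyA, hyw⟩ := Finset.exists_mem_ne h1 SCand.w
            have hyc : y ≠ SCand.c := fun h => hcA (h ▸ hyA)
            have hy := hother y A hyw hyc
            have hm := hmin y hyA
            have hle2 : plu Pf A (loser tb Pf A hA) ≤ plu Pf A y := by
              rcases Prod.Lex.le_iff.mp hm with h | h
              · exact le_of_lt h
              · exact le_of_eq h.1
            rw [← hLe] at hle2
            rw [← hPf] at hge
            omega
        exact IH _ (Finset.erase_ssubset (loser_mem _ _ _ _)) (main _)
      · rw [dif_neg h1, dif_pos hne]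
        have hcard : A.card = 1 := by
          have := Finset.card_pos.mpr hne
          omega
        obtain ⟨x, hxA⟩ := Finset.card_eq_one.mp hcard
        have hall : ∀ z ∈ A, z = x := fun z hz => Finset.mem_singleton.mp (hxA ▸ hz)
        have hch : hne.choose = x := hall _ hne.choose_spec
        rw [hch]
        rcases hcw with h | h
        · exact Or.inl (hall _ h).symm
        · exact Or.inr (hall _ h).symm
  exact key Finset.univ (Or.inl (Finset.mem_univ _))
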